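/- Let q, q' ∈ ℝⁿ (n ≥ 2) with q ≠ q', and suppose the last coordinate of q and of q' both equal 1. Then ‖q' − q‖ ≤ ‖q‖ · ‖q'‖ · sin(angle(q, q')). (Since q and q' lie in the hyperplane {xⁿ = 1}, the line through them has distance at least 1 from the origin, which yields this bound used in the proof of Lemma 2.3.) -/
import Mathlib

open InnerProductGeometry RealInnerProductSpace

/-- If `q ≠ q'` both lie in the hyperplane `{xⁿ = 1}`, then
`‖q' − q‖ ≤ ‖q‖ · ‖q'‖ · sin(angle q q')`. -/
theorem norm_sub_le_of_last_coord_one {n : ℕ} (hn : 2 ≤ n)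
    (q q' : EuclideanSpace ℝ (Fin n)) (hne : q ≠ q')
    (hq : q ⟨n - 1, by omega⟩ = 1) (hq' : q' ⟨n - 1, by omega⟩ = 1) :
    ‖q' - q‖ ≤ ‖q‖ * ‖q'‖ * Real.sin (angle q q') := by
  set i : Fin n := ⟨n - 1, by omega⟩
  set e : EuclideanSpace ℝ (Fin n) := EuclideanSpace.single i (1 : ℝ) with he
  set v : EuclideanSpace ℝ (Fin n) := q - e with hv
  set v' : EuclideanSpace ℝ (Fin n) := q' - e with hv'
  have hee : ⟪e, e⟫ = (1 : ℝ) := by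
    simp [he, EuclideanSpace.inner_single_right, EuclideanSpace.single_apply]
  have hve : ⟪v, e⟫ = (0 : ℝ) := by
    rw [hv, inner_sub_left, hee, EuclideanSpace.inner_single_right]
    simp [hq]
  have hv'e : ⟪v', e⟫ = (0 : ℝ) := by
    rw [hv', inner_sub_left, hee, EuclideanSpace.inner_single_right]
    simp [hq']
  have hev : ⟪e, v⟫ = (0 : ℝ) := by rw [real_inner_comm]; exact hve
  have hev' : ⟪e, v'⟫ = (0 : ℝ) := by rw [real_inner_comm]; exact hv'e
  have hq1 : q = v + e := by rw [hv]; abel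
  have hq2 : q' = v' + e := by rw [hv']; abel
  have hC : ⟪q, q'⟫ = ⟪v, v'⟫ + 1 := by
    rw [hq1, hq2, inner_add_left, inner_add_right, inner_add_right, hee,
      hve, hev']
    ring
  have hA : ⟪q, q⟫ = ⟪v, v⟫ + 1 := by
    rw [hq1, inner_add_left, inner_add_right, inner_add_right, hee,
      hve, hev]
    ring
  have hB : ⟪q', q'⟫ = ⟪v', v'⟫ + 1 := by
    rw [hq2, inner_add_left, inner_add_right, inner_add_right, hee,
      hv'e, hev']
    ring
  have hsub : ‖q' - q‖ ^ 2 = ⟪v', v'⟫ + ⟪v, v⟫ - 2 * ⟪v, v'⟫ := by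
    have h3 : q' - q = v' - v := by rw [hq1, hq2]; abel
    rw [h3, norm_sub_sq_real, ← real_inner_self_eq_norm_sq,
      ← real_inner_self_eq_norm_sq, real_inner_comm v' v]
    ring
  have hCS : ⟪v, v'⟫ * ⟪v, v'⟫ ≤ ⟪v, v⟫ * ⟪v', v'⟫ := real_inner_mul_inner_self_le v v'
  have key : ‖q' - q‖ ^ 2 ≤ ⟪q, q⟫ * ⟪q', q'⟫ - ⟪q, q'⟫ * ⟪q, q'⟫ := by
    rw [hsub, hA, hB, hC]; nlinarith
  have hs := sin_angle_mul_norm_mul_norm q q'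
  calc ‖q' - q‖ = √(‖q' - q‖ ^ 2) := by rw [Real.sqrt_sq (norm_nonneg _)]
    _ ≤ √(⟪q, q⟫ * ⟪q', q'⟫ - ⟪q, q'⟫ * ⟪q, q'⟫) := Real.sqrt_le_sqrt key
    _ = ‖q‖ * ‖q'‖ * Real.sin (angle q q') := by rw [← hs]; ring
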